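/- arXiv:2502.06642 — 2 statements merged into one kernel-verified Lean document; each statement's English description precedes it below -/
import Mathlib

section
/- Let A, B ⊆ H be nonempty closed convex sets with A ∩ B ≠ ∅, and define T : H → H by T(x) := P_A(x) if d(x, A) ≥ d(x, B) and T(x) := P_B(x) otherwise. Then T is a cutter and Fix T = A ∩ B. -/
open RealInnerProductSpace

/-- An operator `T` is a cutter if it has a fixed point and
`⟪z - T x, x - T x⟫ ≤ 0` for all `x` and fixed points `z` of `T`. -/
def IsCutter {H : Type*} [NormedAddCommGroup H] [InnerProductSpace ℝ H]
    (T : H → H) : Prop :=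
  {x | T x = x}.Nonempty ∧ ∀ x z, T z = z → ⟪z - T x, x - T x⟫ ≤ 0

lemma proj_inner {H : Type*} [NormedAddCommGroup H] [InnerProductSpace ℝ H]
    {A : Set H} (hconv : Convex ℝ A) {x p : H} (hp : p ∈ A)
    (hmin : ∀ y ∈ A, ‖x - p‖ ≤ ‖x - y‖) :
    ∀ y ∈ A, ⟪x - p, y - p⟫ ≤ 0 := by
  haveI : Nonempty A := ⟨⟨p, hp⟩⟩
  have h : ‖x - p‖ = ⨅ w : A, ‖x - w‖ := by
    apply le_antisymm
    · exact le_ciInf fun w => hmin w w.2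
    · exact ciInf_le ⟨0, fun b ⟨w, hw⟩ => hw ▸ norm_nonneg _⟩ (⟨p, hp⟩ : A)
  exact (norm_eq_iInf_iff_real_inner_le_zero hconv hp).mp h

lemma proj_self {H : Type*} [NormedAddCommGroup H] [InnerProductSpace ℝ H]
    {A : Set H} {x p : H} (hx : x ∈ A)
    (hmin : ∀ y ∈ A, ‖x - p‖ ≤ ‖x - y‖) : p = x := by
  have := hmin x hx
  simp only [sub_self, norm_zero] at this
  have : ‖x - p‖ = 0 := le_antisymm this (norm_nonneg _)
  exact (norm_sub_eq_zero_iff.mp this).symm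

theorem stmt_18 {H : Type*} [NormedAddCommGroup H] [InnerProductSpace ℝ H]
    (A B : Set H) (hA : A.Nonempty) (hB : B.Nonempty)
    (hAclosed : IsClosed A) (hAconv : Convex ℝ A)
    (hBclosed : IsClosed B) (hBconv : Convex ℝ B)
    (hAB : (A ∩ B).Nonempty)
    (PA PB : H → H)
    (hPA : ∀ x, PA x ∈ A ∧ ∀ y ∈ A, ‖x - PA x‖ ≤ ‖x - y‖)
    (hPB : ∀ x, PB x ∈ B ∧ ∀ y ∈ B, ‖x - PB x‖ ≤ ‖x - y‖)
    (T : H → H)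
    (hT : ∀ x, T x = if Metric.infDist x B ≤ Metric.infDist x A then PA x else PB x) :
    IsCutter T ∧ {x | T x = x} = A ∩ B := by
  have hfix : {x | T x = x} = A ∩ B := by
    ext x
    constructor
    · intro hx
      rw [Set.mem_setOf_eq, hT x] at hx
      split_ifs at hx with h
      · -- T x = PA x = x, so x ∈ A
        have hxA : x ∈ A := hx ▸ (hPA x).1
        have hdA : Metric.infDist x A = 0 := by
          rw [(hAclosed.mem_iff_infDist_zero hA)] at hxA; exact hxA
        have hdB : Metric.infDist x B = 0 :=
          le_antisymm (hdA ▸ h) (Metric.infDist_nonneg)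
        exact ⟨hxA, (hBclosed.mem_iff_infDist_zero hB).mpr hdB⟩
      · have hxB : x ∈ B := hx ▸ (hPB x).1
        have hdB : Metric.infDist x B = 0 :=
          (hBclosed.mem_iff_infDist_zero hB).mp hxB
        have h' := not_le.mp h
        have h2 : (0:ℝ) ≤ Metric.infDist x A := Metric.infDist_nonneg
        rw [hdB] at h'
        exact absurd h' (not_lt.mpr h2)
    · rintro ⟨hxA, hxB⟩
      rw [Set.mem_setOf_eq, hT x]
      split_ifs with h
      · exact proj_self hxA (hPA x).2
      · exact proj_self hxB (hPB x).2
  refine ⟨⟨hfix ▸ hAB, ?_⟩, hfix⟩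
  intro x z hz
  have hzAB : z ∈ A ∩ B := hfix ▸ hz
  rw [hT x]
  split_ifs with h
  · have := proj_inner hAconv (hPA x).1 (hPA x).2 z hzAB.1
    calc ⟪z - PA x, x - PA x⟫ = ⟪x - PA x, z - PA x⟫ := real_inner_comm _ _
      _ ≤ 0 := this
  · have := proj_inner hBconv (hPB x).1 (hPB x).2 z hzAB.2
    calc ⟪z - PB x, x - PB x⟫ = ⟪x - PB x, z - PB x⟫ := real_inner_comm _ _
      _ ≤ 0 := this
end

section
/- Let f : H → ℝ be a continuous convex function with S(f,0) := {x : f(x) ≤ 0} ≠ ∅, and for each x let g(x) ∈ ∂f(x) be a chosen subgradient. Define the subgradient projection P_f(x) := x − (f(x)/‖g(x)‖²) g(x) if f(x) > 0 and P_f(x) := x otherwise. Then P_f is a cutter and Fix P_f = S(f, 0). -/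
open RealInnerProductSpace

theorem stmt_19 {H : Type*} [NormedAddCommGroup H] [InnerProductSpace ℝ H]
    (f : H → ℝ) (hcont : Continuous f) (hconv : ConvexOn ℝ Set.univ f)
    (hS : {x | f x ≤ 0}.Nonempty)
    (g : H → H) (hg : ∀ x y, f x + ⟪g x, y - x⟫ ≤ f y)
    (Pf : H → H)
    (hPf : ∀ x, Pf x = if 0 < f x then x - (f x / ‖g x‖ ^ 2) • g x else x) :
    IsCutter Pf ∧ {x | Pf x = x} = {x | f x ≤ 0} := by
  obtain ⟨z₀, hz₀⟩ := hS
  simp only [Set.mem_setOf_eq] at hz₀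
  -- g x ≠ 0 when f x > 0
  have hgne : ∀ x, 0 < f x → g x ≠ 0 := by
    intro x hx hg0
    have := hg x z₀
    rw [hg0, inner_zero_left] at this
    linarith [hz₀]
  -- fixed point set
  have hfix : {x | Pf x = x} = {x | f x ≤ 0} := by
    ext x
    simp only [Set.mem_setOf_eq, hPf x]
    constructor
    · intro h
      by_contra hle
      push_neg at hle
      rw [if_pos hle] at h
      have hc : (f x / ‖g x‖ ^ 2) • g x = 0 := by
        have := sub_eq_iff_eq_add.mp h
        simpa using this.symm
      rcases smul_eq_zero.mp hc with h1 | h2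
      · have hgx := hgne x hle
        have : ‖g x‖ ^ 2 ≠ 0 := pow_ne_zero _ (norm_ne_zero_iff.mpr hgx)
        have : f x = 0 := by
          field_simp at h1
          simpa using h1
        linarith
      · exact hgne x hle h2
    · intro h
      rw [if_neg (not_lt.mpr h)]
  refine ⟨⟨⟨z₀, hfix ▸ hz₀⟩, ?_⟩, hfix⟩
  intro x z hz
  have hfz : f z ≤ 0 := by
    have hm : z ∈ {x | Pf x = x} := hz
    rw [hfix] at hm; exact hm
  rw [hPf x]
  by_cases hx : 0 < f x
  · rw [if_pos hx]
    have hgx := hgne x hx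
    have hn : (0:ℝ) < ‖g x‖ ^ 2 := pow_pos (norm_pos_iff.mpr hgx) _
    set c := f x / ‖g x‖ ^ 2 with hc
    have hcpos : 0 < c := div_pos hx hn
    have h1 : x - (x - c • g x) = c • g x := by abel
    have h2 : z - (x - c • g x) = (z - x) + c • g x := by abel
    rw [h1, h2, inner_add_left, real_inner_smul_right, real_inner_smul_left,
      real_inner_smul_right, real_inner_self_eq_norm_sq]
    have hkey : ⟪g x, z - x⟫ ≤ f z - f x := by linarith [hg x z]
    have : ⟪z - x, g x⟫ + c * ‖g x‖ ^ 2 ≤ 0 := by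
      rw [real_inner_comm]
      have : c * ‖g x‖ ^ 2 = f x := by
        rw [hc]; field_simp
      linarith
    calc c * ⟪z - x, g x⟫ + c * (c * ‖g x‖ ^ 2)
        = c * (⟪z - x, g x⟫ + c * ‖g x‖ ^ 2) := by ring
      _ ≤ 0 := mul_nonpos_of_nonneg_of_nonpos hcpos.le this
  · rw [if_neg hx]
    simp
end
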